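/- For lifts of circle diffeomorphisms f, g define the Bott cocycle C(f,g) = −(1/(48π)) ∫₀^{2π} log(f'(g(x))) · (g''(x)/g'(x)) dx. Then for all lifts f, g, h of circle diffeomorphisms the cocycle identity C(f, g ∘ h) + C(g, h) = C(f ∘ g, h) + C(f, g) holds; equivalently, the Virasoro group product (f,α)·(g,β) = (f ∘ g, α + β + C(f,g)) on pairs (lift, real number) is associative. -/

import Mathlib

open Real

/-- The Bott cocycle `C(f,g) = -(1/(48π)) ∫₀^{2π} log(f'(g(x))) (g''(x)/g'(x)) dx`. -/
noncomputable def bottCocycle (f g : ℝ → ℝ) : ℝ :=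
  -(1 / (48 * π)) *
    ∫ x in (0:ℝ)..(2 * π), Real.log (deriv f (g x)) * (deriv (deriv g) x / deriv g x)

private lemma lift_deriv_periodic {f : ℝ → ℝ} (c : ℝ)
    (hl : ∀ x, f (x + 2*π) = f x + c) : Function.Periodic (deriv f) (2*π) := by
  intro x
  have h1 : deriv (fun y => f (y + 2*π)) x = deriv f (x + 2*π) := by
    simpa using deriv_comp_add_const f (2*π) x
  have h2 : (fun y => f (y + 2*π)) = fun y => f y + c := funext hl
  rw [h2] at h1
  simpa [deriv_add_const] using h1.symm

private lemma comp_deriv {g h : ℝ → ℝ} (hg : ContDiff ℝ (⊤ : ℕ∞) g) (hh : ContDiff ℝ (⊤ : ℕ∞) h) (x : ℝ) :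
    deriv (g ∘ h) x = deriv g (h x) * deriv h x :=
  deriv_comp x (hg.differentiable (by simp) _) (hh.differentiable (by simp) _)

private lemma comp_deriv2 {g h : ℝ → ℝ} (hg : ContDiff ℝ (⊤ : ℕ∞) g) (hh : ContDiff ℝ (⊤ : ℕ∞) h) (x : ℝ) :
    deriv (deriv (g ∘ h)) x
      = deriv (deriv g) (h x) * (deriv h x)^2 + deriv g (h x) * deriv (deriv h) x := by
  have hdg : ContDiff ℝ (⊤:ℕ∞) (deriv g) := (contDiff_infty_iff_deriv.1 (hg.of_le (by simp))).2
  have hdh : ContDiff ℝ (⊤:ℕ∞) (deriv h) := (contDiff_infty_iff_deriv.1 (hh.of_le (by simp))).2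
  have e : deriv (g ∘ h) = fun y => deriv g (h y) * deriv h y :=
    funext fun y => comp_deriv hg hh y
  rw [e]
  have d1 : DifferentiableAt ℝ (fun y => deriv g (h y)) x :=
    (hdg.differentiable (by simp) _).comp x (hh.differentiable (by simp) _)
  have d2 : DifferentiableAt ℝ (deriv h) x := hdh.differentiable (by simp) _
  rw [deriv_fun_mul d1 d2]
  have : deriv (fun y => deriv g (h y)) x = deriv (deriv g) (h x) * deriv h x :=
    deriv_comp x (hdg.differentiable (by simp) _) (hh.differentiable (by simp) _)
  rw [this]; ring

/-- **The Bott cocycle identity.**  For lifts `f, g, h` of circle diffeomorphisms,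
`C(f, g ∘ h) + C(g, h) = C(f ∘ g, h) + C(f, g)`; equivalently the Virasoro group
product `(f,α)·(g,β) = (f ∘ g, α + β + C(f,g))` is associative. -/
theorem bott_cocycle_identity
    (f g h : ℝ → ℝ)
    (hf : ContDiff ℝ (⊤ : ℕ∞) f) (hf' : ∀ x, 0 < deriv f x)
    (hflift : ∀ x, f (x + 2 * π) = f x + 2 * π)
    (hg : ContDiff ℝ (⊤ : ℕ∞) g) (hg' : ∀ x, 0 < deriv g x)
    (hglift : ∀ x, g (x + 2 * π) = g x + 2 * π)
    (hh : ContDiff ℝ (⊤ : ℕ∞) h) (hh' : ∀ x, 0 < deriv h x)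
    (hhlift : ∀ x, h (x + 2 * π) = h x + 2 * π) :
    bottCocycle f (g ∘ h) + bottCocycle g h = bottCocycle (f ∘ g) h + bottCocycle f g := by
  -- continuity of derivatives
  have hdf : ContDiff ℝ (⊤:ℕ∞) (deriv f) := (contDiff_infty_iff_deriv.1 (hf.of_le (by simp))).2
  have hdg : ContDiff ℝ (⊤:ℕ∞) (deriv g) := (contDiff_infty_iff_deriv.1 (hg.of_le (by simp))).2
  have hdh : ContDiff ℝ (⊤:ℕ∞) (deriv h) := (contDiff_infty_iff_deriv.1 (hh.of_le (by simp))).2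
  have hddg : Continuous (deriv (deriv g)) := ((contDiff_infty_iff_deriv.1 hdg).2).continuous
  have hddh : Continuous (deriv (deriv h)) := ((contDiff_infty_iff_deriv.1 hdh).2).continuous
  have cg : Continuous g := hg.continuous
  have ch : Continuous h := hh.continuous
  set A : ℝ → ℝ := fun x => Real.log (deriv f (g (h x))) with hAdef
  set B : ℝ → ℝ := fun x => Real.log (deriv g (h x)) with hBdef
  set P : ℝ → ℝ := fun x => deriv (deriv g) (h x) / deriv g (h x) * deriv h x with hPdef
  set Q : ℝ → ℝ := fun x => deriv (deriv h) x / deriv h x with hQdef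
  have cA : Continuous A :=
    (hdf.continuous.comp (cg.comp ch)).log (fun x => (hf' _).ne')
  have cB : Continuous B :=
    (hdg.continuous.comp ch).log (fun x => (hg' _).ne')
  have cP : Continuous P :=
    ((hddg.comp ch).div (hdg.continuous.comp ch) (fun x => (hg' _).ne')).mul hdh.continuous
  have cQ : Continuous Q := hddh.div hdh.continuous (fun x => (hh' _).ne')
  -- integrability
  have iAP : IntervalIntegrable (fun x => A x * P x) MeasureTheory.volume 0 (2*π) :=
    (cA.mul cP).intervalIntegrable _ _
  have iAQ : IntervalIntegrable (fun x => A x * Q x) MeasureTheory.volume 0 (2*π) :=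
    (cA.mul cQ).intervalIntegrable _ _
  have iBQ : IntervalIntegrable (fun x => B x * Q x) MeasureTheory.volume 0 (2*π) :=
    (cB.mul cQ).intervalIntegrable _ _
  -- claim 1 : integrand of C(f, g∘h)
  have claim1 : ∀ x, Real.log (deriv f ((g ∘ h) x)) * (deriv (deriv (g ∘ h)) x / deriv (g ∘ h) x)
      = A x * P x + A x * Q x := by
    intro x
    rw [comp_deriv hg hh, comp_deriv2 hg hh]
    have h1 : deriv g (h x) ≠ 0 := (hg' _).ne'
    have h2 : deriv h x ≠ 0 := (hh' _).ne'
    simp only [Function.comp_apply, hAdef, hPdef, hQdef]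
    field_simp
  -- claim 3 : integrand of C(f∘g, h)
  have claim3 : ∀ x, Real.log (deriv (f ∘ g) (h x)) * (deriv (deriv h) x / deriv h x)
      = (A x + B x) * Q x := by
    intro x
    rw [comp_deriv hf hg, Real.log_mul (hf' _).ne' (hg' _).ne']
  -- claim 4 : change of variables in C(f, g)
  have claim4 : (∫ x in (0:ℝ)..(2*π), Real.log (deriv f (g x)) * (deriv (deriv g) x / deriv g x))
      = ∫ x in (0:ℝ)..(2*π), A x * P x := by
    set φ : ℝ → ℝ := fun x => Real.log (deriv f (g x)) * (deriv (deriv g) x / deriv g x)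
      with hφdef
    have cφ : Continuous φ :=
      ((hdf.continuous.comp cg).log (fun x => (hf' _).ne')).mul
        (hddg.div hdg.continuous (fun x => (hg' _).ne'))
    have pdf : Function.Periodic (deriv f) (2*π) := lift_deriv_periodic (2*π) hflift
    have pdg : Function.Periodic (deriv g) (2*π) := lift_deriv_periodic (2*π) hglift
    have pddg : Function.Periodic (deriv (deriv g)) (2*π) := by
      apply lift_deriv_periodic (0:ℝ)
      intro x; rw [pdg x, add_zero]
    have pφ : Function.Periodic φ (2*π) := by
      intro x
      simp only [hφdef, hglift x, pdf (g x), pdg x, pddg x]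
    -- substitution x = h t
    have sub : (∫ t in (0:ℝ)..(2*π), deriv h t • (φ ∘ h) t) = ∫ x in (h 0)..(h (2*π)), φ x := by
      apply intervalIntegral.integral_comp_smul_deriv (f := h) (f' := deriv h)
      · intro t _; exact (hh.differentiable (by simp) t).hasDerivAt
      · exact hdh.continuous.continuousOn
      · exact cφ
    have hper : (∫ x in (h 0)..(h (2*π)), φ x) = ∫ x in (0:ℝ)..(2*π), φ x := by
      have e1 : h (2*π) = h 0 + 2*π := by
        have := hhlift 0; rwa [zero_add] at this
      rw [e1]
      have := pφ.intervalIntegral_add_eq (h 0) 0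
      rwa [zero_add] at this
    have eint : ∀ t, deriv h t • (φ ∘ h) t = A t * P t := by
      intro t
      simp only [hφdef, smul_eq_mul, hAdef, hPdef, Function.comp_apply]
      ring
    calc (∫ x in (0:ℝ)..(2*π), φ x) = ∫ x in (h 0)..(h (2*π)), φ x := hper.symm
      _ = ∫ t in (0:ℝ)..(2*π), deriv h t • (φ ∘ h) t := sub.symm
      _ = ∫ t in (0:ℝ)..(2*π), A t * P t := by
          apply intervalIntegral.integral_congr
          intro t _; exact eint t
  -- now put everything together
  unfold bottCocycle
  rw [claim4]
  have e1 : (∫ x in (0:ℝ)..(2*π),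
      Real.log (deriv f ((g ∘ h) x)) * (deriv (deriv (g ∘ h)) x / deriv (g ∘ h) x))
      = (∫ x in (0:ℝ)..(2*π), A x * P x) + ∫ x in (0:ℝ)..(2*π), A x * Q x := by
    rw [← intervalIntegral.integral_add iAP iAQ]
    apply intervalIntegral.integral_congr
    intro x _; exact claim1 x
  have e2 : (∫ x in (0:ℝ)..(2*π),
      Real.log (deriv (f ∘ g) (h x)) * (deriv (deriv h) x / deriv h x))
      = (∫ x in (0:ℝ)..(2*π), A x * Q x) + ∫ x in (0:ℝ)..(2*π), B x * Q x := by
    rw [← intervalIntegral.integral_add iAQ iBQ]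
    apply intervalIntegral.integral_congr
    intro x _
    exact (claim3 x).trans (add_mul _ _ _)
  rw [e1, e2]
  have e3 : (∫ x in (0:ℝ)..(2*π),
      Real.log (deriv g (h x)) * (deriv (deriv h) x / deriv h x))
      = ∫ x in (0:ℝ)..(2*π), B x * Q x := rfl
  rw [e3]
  ring
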